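/- Let B be an annihilator nilpotent skew brace satisfying the ascending chain condition on sub skew braces. Then the following are equivalent: (1) B is finitely generated as a skew brace; (2) the group (B,+) is finitely generated; (3) the group (B,∘) is finitely generated. -/
import Mathlib


/-- A skew brace: a type with two group structures `(B,+)` and `(B,∘)`
(the multiplicative group is written with `*`) sharing the same underlying set,
such that `a ∘ (b + c) = a ∘ b - a + a ∘ c`. -/
class SkewBrace (B : Type*) extends AddGroup B, Group B where
  circ_add : ∀ a b c : B, a * (b + c) = a * b - a + a * c

namespace SkewBrace

variable {B : Type*} [SkewBrace B]

/-- `lam a b = -a + a ∘ b`, i.e. `λ_a(b)`. -/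
def lam (a b : B) : B := -a + a * b

/-- `a * b` (the star operation) `= λ_a(b) - b = -a + a ∘ b - b`. -/
def starOp (a b : B) : B := -a + a * b - b

/-- `X * Y` : the additive subgroup generated by all `x * y`, `x ∈ X`, `y ∈ Y`,
regarded as a set. -/
def starSpan (X Y : Set B) : Set B :=
  (AddSubgroup.closure {z : B | ∃ x ∈ X, ∃ y ∈ Y, z = starOp x y} : AddSubgroup B)

/-- `[X,Y]₊` : the additive subgroup generated by all additive commutators
`x + y - x - y`, `x ∈ X`, `y ∈ Y`, regarded as a set. -/
def addCommSpan (X Y : Set B) : Set B :=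
  (AddSubgroup.closure {z : B | ∃ x ∈ X, ∃ y ∈ Y, z = x + y - x - y} : AddSubgroup B)

/-- A sub skew brace: a subset containing `0` and closed under both group
operations and both inverses. -/
def IsSubSkewBrace (S : Set B) : Prop :=
  0 ∈ S ∧ (∀ a ∈ S, ∀ b ∈ S, a + b ∈ S) ∧ (∀ a ∈ S, -a ∈ S) ∧
    (∀ a ∈ S, ∀ b ∈ S, a * b ∈ S) ∧ (∀ a ∈ S, a⁻¹ ∈ S)

/-- An ideal: a sub skew brace that is normal in `(B,+)` and in `(B,∘)` and
invariant under all `λ_a`. -/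
def IsIdeal (S : Set B) : Prop :=
  IsSubSkewBrace S ∧ (∀ a : B, ∀ i ∈ S, a + i - a ∈ S) ∧
    (∀ a : B, ∀ i ∈ S, a * i * a⁻¹ ∈ S) ∧ (∀ a : B, ∀ i ∈ S, lam a i ∈ S)

/-- The annihilator `Ann(B) = {x | x∘a = a∘x = x+a = a+x for all a}`. -/
def annSet (B : Type*) [SkewBrace B] : Set B :=
  {x | ∀ a : B, x * a = a * x ∧ x * a = x + a ∧ x + a = a + x}

/-- The annihilator series: `Ann₀(B) = 0` and `Ann_{n+1}(B)` is the preimage of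
`Ann(B/Annₙ(B))` under the quotient map; membership is expressed via coset
equalities modulo `Annₙ(B)`. -/
def annSeries (B : Type*) [SkewBrace B] : ℕ → Set B
  | 0 => {0}
  | n + 1 => {x | ∀ a : B,
      x * a - a * x ∈ annSeries B n ∧
      x * a - (x + a) ∈ annSeries B n ∧
      (x + a) - (a + x) ∈ annSeries B n}

/-- `B` is annihilator nilpotent if `Annₙ(B) = B` for some `n`. -/
def AnnNilpotent (B : Type*) [SkewBrace B] : Prop :=
  ∃ n : ℕ, annSeries B n = Set.univ

/-- `leftPow B n` is `B^{n+1}`: `B¹ = B`, `B^{n+1} = B * Bⁿ`. -/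
def leftPow (B : Type*) [SkewBrace B] : ℕ → Set B
  | 0 => Set.univ
  | n + 1 => starSpan Set.univ (leftPow B n)

/-- `rightPow B n` is `B⁽ⁿ⁺¹⁾`: `B⁽¹⁾ = B`, `B⁽ⁿ⁺¹⁾ = B⁽ⁿ⁾ * B`. -/
def rightPow (B : Type*) [SkewBrace B] : ℕ → Set B
  | 0 => Set.univ
  | n + 1 => starSpan (rightPow B n) Set.univ

/-- `B` is left nilpotent if `Bⁿ = 0` for some `n ≥ 1`. -/
def LeftNilpotent (B : Type*) [SkewBrace B] : Prop :=
  ∃ n : ℕ, leftPow B n = ({0} : Set B)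

/-- `B` is right nilpotent if `B⁽ⁿ⁾ = 0` for some `n ≥ 1`. -/
def RightNilpotent (B : Type*) [SkewBrace B] : Prop :=
  ∃ n : ℕ, rightPow B n = ({0} : Set B)

/-- `strongPow B n` is `B^[n+1]`: `B^[1] = B`, and `B^[n+1]` is the additive
subgroup generated by `⋃_{i=1}^{n} B^[i] * B^[n+1-i]`. -/
def strongPow (B : Type*) [SkewBrace B] : ℕ → Set B
  | 0 => Set.univ
  | n + 1 => (AddSubgroup.closure (⋃ j : Fin (n + 1),
      {z : B | ∃ x ∈ strongPow B j.1, ∃ y ∈ strongPow B (n - j.1), z = starOp x y}) :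
        AddSubgroup B)
  decreasing_by
  · exact j.isLt
  · omega

/-- `B` is strongly nilpotent if `B^[n] = 0` for some `n ≥ 1`. -/
def StronglyNilpotent (B : Type*) [SkewBrace B] : Prop :=
  ∃ n : ℕ, strongPow B n = ({0} : Set B)

/-- `gammaAux B n` is `Γ_[n+1](B)`: `Γ_[1](B) = B` and, for `n ≥ 2`, `Γ_[n](B)` is
the additive subgroup generated by the sets `Γ_[i](B) * Γ_[n-i](B)` and
`[Γ_[i](B), Γ_[n-i](B)]₊` for `1 ≤ i ≤ n-1`. -/
def gammaAux (B : Type*) [SkewBrace B] : ℕ → Set B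
  | 0 => Set.univ
  | n + 1 => (AddSubgroup.closure (⋃ j : Fin (n + 1),
      {z : B | ∃ x ∈ gammaAux B j.1, ∃ y ∈ gammaAux B (n - j.1),
        z = starOp x y ∨ z = x + y - x - y}) : AddSubgroup B)
  decreasing_by
  · exact j.isLt
  · omega

/-- `Γ_[n](B)` for `n ≥ 1` (one-based indexing as in the paper). -/
def gammaBr (B : Type*) [SkewBrace B] (n : ℕ) : Set B := gammaAux B (n - 1)

/-- `B` is finitely generated as a skew brace: there is a finite subset whose
smallest containing sub skew brace is `B` itself. -/
def SBFinitelyGenerated (B : Type*) [SkewBrace B] : Prop :=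
  ∃ S : Set B, S.Finite ∧ ∀ T : Set B, IsSubSkewBrace T → S ⊆ T → T = Set.univ

/-- `B` satisfies the ascending chain condition on sub skew braces. -/
def ACCSubSkewBrace (B : Type*) [SkewBrace B] : Prop :=
  ∀ f : ℕ → Set B, (∀ n, IsSubSkewBrace (f n)) → (∀ n, f n ⊆ f (n + 1)) →
    ∃ N : ℕ, ∀ n, N ≤ n → f n = f N


/-! ### Auxiliary development -/

lemma mulZero (a : B) : a * 0 = a := by
  have h := circ_add a 0 0
  rw [add_zero, sub_eq_add_neg, add_assoc] at h
  have h2 : -a + a * 0 = 0 := (left_eq_add.mp h).symm ▸ rfl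
  exact (neg_add_eq_zero.mp h2).symm

lemma zeroEqOne : (0 : B) = 1 := by
  have := mulZero (1 : B)
  rwa [one_mul] at this

lemma mulLam (a b : B) : a * b = a + lam a b := by simp [lam]

lemma mulNeg' (a b : B) : a * (-b) = a - a * b + a := by
  have h := circ_add a b (-b)
  rw [add_neg_cancel, mulZero] at h
  have h2 : a * (-b) = -(a * b - a) + (a * b - a + a * (-b)) := (neg_add_cancel_left _ _).symm
  rw [← h, neg_sub] at h2
  rw [h2, sub_eq_add_neg, add_assoc]

lemma lamOne (c : B) : lam 1 c = c := by
  simp [lam, ← zeroEqOne]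

lemma lamMulComp (a b c : B) : lam (a * b) c = lam a (lam b c) := by
  simp only [lam]
  rw [circ_add a (-b) (b*c), mulNeg', mul_assoc]
  simp [sub_eq_add_neg, add_assoc]

section Cong

variable {I : Set B} (hI : IsIdeal I)

include hI

lemma Rrefl (u : B) : u - u ∈ I := by simpa using hI.1.1

lemma Rsymm {u v : B} (h : u - v ∈ I) : v - u ∈ I := by
  have := hI.1.2.2.1 _ h
  rwa [neg_sub] at this

lemma Rtrans {u v w : B} (h1 : u - v ∈ I) (h2 : v - w ∈ I) : u - w ∈ I := by
  have := hI.1.2.1 _ h1 _ h2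
  rwa [sub_add_sub_cancel] at this

lemma Rtrans3 {u v w z : B} (h1 : u - v ∈ I) (h2 : v - w ∈ I) (h3 : w - z ∈ I) :
    u - z ∈ I := Rtrans hI (Rtrans hI h1 h2) h3

/-- `u - v ∈ I ↔ -v + u ∈ I`. -/
lemma Rneg_iff {u v : B} : u - v ∈ I ↔ -v + u ∈ I := by
  constructor
  · intro h
    have := hI.2.1 (-v) _ h
    have e : -v + (u - v) - -v = -v + u := by
      rw [sub_neg_eq_add, sub_eq_add_neg, add_assoc, add_assoc, neg_add_cancel, add_zero]
    rwa [e] at this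
  · intro h
    have := hI.2.1 v _ h
    have e : v + (-v + u) - v = u - v := by rw [add_neg_cancel_left]
    rwa [e] at this

lemma RaddLeft {u v : B} (c : B) (h : u - v ∈ I) : (c + u) - (c + v) ∈ I := by
  have := hI.2.1 c _ h
  have e : c + (u - v) - c = (c + u) - (c + v) := by
    simp [sub_eq_add_neg, add_assoc]
  rwa [e] at this

lemma RaddRight {u v : B} (c : B) (h : u - v ∈ I) : (u + c) - (v + c) ∈ I := by
  have e : (u + c) - (v + c) = u - v := by
    rw [sub_eq_add_neg, neg_add_rev, sub_eq_add_neg, add_assoc, ← add_assoc c,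
      add_neg_cancel, zero_add]
  rwa [e]

lemma Rneg {u v : B} (h : u - v ∈ I) : (-u) - (-v) ∈ I := by
  have h1 : -v + u ∈ I := (Rneg_iff hI).mp h
  have h2 := hI.1.2.2.1 _ h1
  rw [neg_add_rev, neg_neg] at h2
  rwa [sub_eq_add_neg, neg_neg]

lemma RmulLeft {u v : B} (a : B) (h : u - v ∈ I) : (a * u) - (a * v) ∈ I := by
  have hu : u = (u - v) + v := by rw [sub_add_cancel]
  have e : a * u = a * (u - v) - a + a * v := by rw [hu] at *; rw [← circ_add]; rw [← hu]
  have heq : a * u - a * v = a * (u - v) - a := by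
    rw [e, add_sub_cancel_right]
  rw [heq, mulLam a (u - v)]
  exact hI.2.1 a _ (hI.2.2.2 a _ h)

/-- left coset characterization: `-v + u ∈ I ↔ v⁻¹ * u ∈ I`. -/
lemma RmulCoset {u v : B} : -v + u ∈ I ↔ v⁻¹ * u ∈ I := by
  constructor
  · intro h
    have this : v⁻¹ * u = lam v⁻¹ (-v + u) := by
      conv_lhs => rw [show u = v + (-v + u) from (add_neg_cancel_left v u).symm]
      rw [circ_add, inv_mul_cancel, ← zeroEqOne, lam, zero_sub]
    rw [this]
    exact hI.2.2.2 _ _ h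
  · intro h
    have hu : u = v * (v⁻¹ * u) := by rw [← mul_assoc, mul_inv_cancel, one_mul]
    have : -v + u = lam v (v⁻¹ * u) := by rw [lam, ← hu]
    rw [this]
    exact hI.2.2.2 _ _ h

lemma RmulRight {u v : B} (a : B) (h : u - v ∈ I) : (u * a) - (v * a) ∈ I := by
  rw [Rneg_iff hI, RmulCoset hI]
  have h1 : v⁻¹ * u ∈ I := (RmulCoset hI).mp ((Rneg_iff hI).mp h)
  have h2 := hI.2.2.1 a⁻¹ _ h1
  rw [inv_inv] at h2
  have e : (v * a)⁻¹ * (u * a) = a⁻¹ * (v⁻¹ * u) * a := by group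
  rwa [e]

lemma RmulLeftCancel {u v : B} (a : B) (h : (a * u) - (a * v) ∈ I) : u - v ∈ I := by
  have := RmulLeft hI a⁻¹ h
  rwa [← mul_assoc, ← mul_assoc, inv_mul_cancel, one_mul, one_mul] at this

lemma Rinv {u v : B} (h : u - v ∈ I) : u⁻¹ - v⁻¹ ∈ I := by
  have h1 : v⁻¹ * u ∈ I := (RmulCoset hI).mp ((Rneg_iff hI).mp h)
  have h2 : v * (v⁻¹ * u)⁻¹ * v⁻¹ ∈ I := hI.2.2.1 v _ (hI.1.2.2.2.2 _ h1)
  have e : v * (v⁻¹ * u)⁻¹ * v⁻¹ = (v⁻¹)⁻¹ * u⁻¹ := by group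
  rw [e] at h2
  exact (Rneg_iff hI).mpr ((RmulCoset hI).mpr h2)

end Cong


/-! ### The annihilator series members are ideals -/

lemma mem_annSeries_succ {k : ℕ} {x : B} :
    x ∈ annSeries B (k+1) ↔ ∀ a : B,
      x * a - a * x ∈ annSeries B k ∧ x * a - (x + a) ∈ annSeries B k ∧
      (x + a) - (a + x) ∈ annSeries B k := Iff.rfl

lemma zero_mem_ann : ∀ k : ℕ, (0 : B) ∈ annSeries B k := by
  intro k
  induction k with
  | zero => rfl
  | succ k ih =>
    rw [mem_annSeries_succ]
    intro a
    have h0a : (0 : B) * a = a := by rw [zeroEqOne, one_mul]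
    have ha0 : a * 0 = a := mulZero a
    refine ⟨?_, ?_, ?_⟩ <;> simp [h0a, ha0, ih]

section Step

variable {k : ℕ} (hI : IsIdeal (annSeries B k))

include hI

lemma J_congr {u v : B} (hu : u ∈ annSeries B (k+1)) (h : v - u ∈ annSeries B k) :
    v ∈ annSeries B (k+1) := by
  rw [mem_annSeries_succ] at hu ⊢
  intro a
  refine ⟨?_, ?_, ?_⟩
  · exact Rtrans3 hI (RmulRight hI a h) ((hu a).1) (RmulLeft hI a (Rsymm hI h))
  · exact Rtrans3 hI (RmulRight hI a h) ((hu a).2.1) (RaddRight hI a (Rsymm hI h))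
  · exact Rtrans3 hI (RaddRight hI a h) ((hu a).2.2) (RaddLeft hI a (Rsymm hI h))

lemma addcomm_J {x y : B} (hx : x ∈ annSeries B (k+1)) (hy : y ∈ annSeries B (k+1))
    (a : B) : ((x + y) + a) - (a + (x + y)) ∈ annSeries B k := by
  rw [mem_annSeries_succ] at hx hy
  have t1 : (x + (y + a)) - (x + (a + y)) ∈ annSeries B k := RaddLeft hI x (hy a).2.2
  have t2 : ((x + a) + y) - ((a + x) + y) ∈ annSeries B k := RaddRight hI y (hx a).2.2
  rw [add_assoc x a y, add_assoc a x y] at t2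
  have := Rtrans hI t1 t2
  rwa [← add_assoc x y a] at this

lemma mul_mem_J {x y : B} (hx : x ∈ annSeries B (k+1)) (hy : y ∈ annSeries B (k+1)) :
    x * y ∈ annSeries B (k+1) := by
  have hcomm := addcomm_J hI hx hy
  rw [mem_annSeries_succ] at hx hy ⊢
  intro a
  refine ⟨?_, ?_, ?_⟩
  · have c1 : x * (y * a) - x * (a * y) ∈ annSeries B k := RmulLeft hI x (hy a).1
    have c2 : (x * a) * y - (a * x) * y ∈ annSeries B k := RmulRight hI y (hx a).1
    rw [mul_assoc x a y, mul_assoc a x y] at c2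
    have := Rtrans hI c1 c2
    rwa [← mul_assoc x y a] at this
  · have c1 : x * (y * a) - x * (y + a) ∈ annSeries B k := RmulLeft hI x (hy a).2.1
    have c2 : (x * y - x) + (x * a) - ((x * y - x) + (x + a)) ∈ annSeries B k :=
      RaddLeft hI (x * y - x) (hx a).2.1
    have e1 : x * y - x + (x + a) = x * y + a := by
      rw [sub_eq_add_neg, add_assoc, neg_add_cancel_left]
    rw [e1, ← circ_add] at c2
    have := Rtrans hI c1 c2
    rwa [← mul_assoc x y a] at this
  · have d : x * y - (x + y) ∈ annSeries B k := (hx y).2.1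
    exact Rtrans3 hI (RaddRight hI a d) (hcomm a) (RaddLeft hI a (Rsymm hI d))

lemma add_mem_J {x y : B} (hx : x ∈ annSeries B (k+1)) (hy : y ∈ annSeries B (k+1)) :
    x + y ∈ annSeries B (k+1) :=
  J_congr hI (mul_mem_J hI hx hy) (Rsymm hI (hx y).2.1)

lemma inv_cong_J {x : B} (hx : x ∈ annSeries B (k+1)) : x⁻¹ - (-x) ∈ annSeries B k := by
  have h := (hx x⁻¹).2.1
  rw [mul_inv_cancel, ← zeroEqOne, zero_sub, neg_add_rev] at h
  -- h : -x⁻¹ + -x ∈ annSeries B k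
  have h2 := hI.1.2.2.1 _ h
  rw [neg_add_rev, neg_neg, neg_neg] at h2
  -- h2 : x + x⁻¹ ∈ annSeries B k
  have h3 := hI.2.1 (-x) _ h2
  rw [sub_neg_eq_add, neg_add_cancel_left] at h3
  rwa [sub_neg_eq_add]

lemma inv_mem_J {x : B} (hx : x ∈ annSeries B (k+1)) : x⁻¹ ∈ annSeries B (k+1) := by
  have hinv := inv_cong_J hI hx
  rw [mem_annSeries_succ] at hx ⊢
  intro a
  refine ⟨?_, ?_, ?_⟩
  · have h := (hx (x⁻¹ * a * x⁻¹)).1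
    have e1 : x * (x⁻¹ * a * x⁻¹) = a * x⁻¹ := by group
    have e2 : (x⁻¹ * a * x⁻¹) * x = x⁻¹ * a := by group
    rw [e1, e2] at h
    exact Rsymm hI h
  · apply RmulLeftCancel hI x
    have e1 : x * (x⁻¹ * a) = a := by group
    rw [e1, circ_add, mul_inv_cancel, ← zeroEqOne, zero_sub]
    have h := RaddLeft hI (-x) (hx a).2.1
    rw [neg_add_cancel_left] at h
    exact Rsymm hI h
  · have f1 : (x⁻¹ + a) - (-x + a) ∈ annSeries B k := RaddRight hI a hinv
    have g1 := RaddLeft hI (-x) (RaddRight hI (-x) ((hx a).2.2))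
    have e1 : -x + ((x + a) + -x) = a + -x := by
      rw [add_assoc x a, neg_add_cancel_left]
    have e2 : -x + ((a + x) + -x) = -x + a := by
      rw [add_assoc a x, add_neg_cancel, add_zero]
    rw [e1, e2] at g1
    have f2 : (-x + a) - (a + -x) ∈ annSeries B k := Rsymm hI g1
    have f3 : (a + -x) - (a + x⁻¹) ∈ annSeries B k := RaddLeft hI a (Rsymm hI hinv)
    exact Rtrans3 hI f1 f2 f3

lemma neg_mem_J {x : B} (hx : x ∈ annSeries B (k+1)) : -x ∈ annSeries B (k+1) :=
  J_congr hI (inv_mem_J hI hx) (Rsymm hI (inv_cong_J hI hx))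

lemma normAdd_J (a : B) {x : B} (hx : x ∈ annSeries B (k+1)) :
    a + x - a ∈ annSeries B (k+1) := by
  apply J_congr hI hx
  have h := RaddRight hI (-a) ((hx a).2.2)
  rw [add_neg_cancel_right, ← sub_eq_add_neg] at h
  exact Rsymm hI h

lemma normMul_J (a : B) {x : B} (hx : x ∈ annSeries B (k+1)) :
    a * x * a⁻¹ ∈ annSeries B (k+1) := by
  apply J_congr hI hx
  have h := RmulRight hI a⁻¹ (Rsymm hI ((hx a).1))
  have e : (x * a) * a⁻¹ = x := by group
  rwa [e] at h

lemma lam_J (a : B) {x : B} (hx : x ∈ annSeries B (k+1)) :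
    lam a x ∈ annSeries B (k+1) := by
  apply J_congr hI hx
  have h : a * x - (a + x) ∈ annSeries B k :=
    Rtrans3 hI (Rsymm hI (hx a).1) ((hx a).2.1) ((hx a).2.2)
  have h2 := RaddLeft hI (-a) h
  rw [neg_add_cancel_left] at h2
  exact h2

end Step

lemma ann_isIdeal : ∀ k : ℕ, IsIdeal (annSeries B k) := by
  intro k
  induction k with
  | zero =>
    have h00 : (0 : B) * 0 = 0 := mulZero 0
    show IsIdeal ({0} : Set B)
    refine ⟨⟨rfl, ?_, ?_, ?_, ?_⟩, ?_, ?_, ?_⟩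
    · rintro a rfl b rfl; simp
    · rintro a rfl; simp
    · rintro a rfl b rfl; simpa using h00
    · rintro a rfl; simp only [Set.mem_singleton_iff, zeroEqOne, inv_one]
    · rintro a i rfl; simp
    · rintro a i rfl; simp [mulZero, mul_inv_cancel, ← zeroEqOne]
    · rintro a i rfl; simp [lam, mulZero]
  | succ k ih =>
    exact ⟨⟨zero_mem_ann _, fun a ha b hb => add_mem_J ih ha hb,
      fun a ha => neg_mem_J ih ha, fun a ha b hb => mul_mem_J ih ha hb,
      fun a ha => inv_mem_J ih ha⟩,
      fun a i hi => normAdd_J ih a hi, fun a i hi => normMul_J ih a hi,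
      fun a i hi => lam_J ih a hi⟩

lemma ann_mono : ∀ k : ℕ, annSeries B k ⊆ annSeries B (k+1) := by
  intro k
  induction k with
  | zero =>
    rintro x rfl
    exact zero_mem_ann 1
  | succ k ih =>
    intro x hx
    rw [mem_annSeries_succ] at hx ⊢
    intro a
    exact ⟨ih (hx a).1, ih (hx a).2.1, ih (hx a).2.2⟩


/-! ### Subgroups squeezed between consecutive annihilator terms -/

/-- `annSeries B k` as an additive subgroup. -/
def annAdd (k : ℕ) : AddSubgroup B where
  carrier := annSeries B k
  zero_mem' := zero_mem_ann k
  add_mem' := fun {a b} ha hb => (ann_isIdeal k).1.2.1 a ha b hb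
  neg_mem' := fun {a} ha => (ann_isIdeal k).1.2.2.1 a ha

/-- `annSeries B k` as a multiplicative subgroup. -/
def annMul (k : ℕ) : Subgroup B where
  carrier := annSeries B k
  one_mem' := by rw [← zeroEqOne]; exact zero_mem_ann k
  mul_mem' := fun {a b} ha hb => (ann_isIdeal k).1.2.2.2.1 a ha b hb
  inv_mem' := fun {a} ha => (ann_isIdeal k).1.2.2.2.2 a ha

/-- An additive subgroup squeezed between `Ann_k` and `Ann_{k+1}` is a sub skew brace. -/
lemma addSubgroup_isSub {k : ℕ} {H : Set B} (h0 : (0:B) ∈ H)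
    (hadd : ∀ a ∈ H, ∀ b ∈ H, a + b ∈ H) (hneg : ∀ a ∈ H, -a ∈ H)
    (hlow : annSeries B k ⊆ H) (hup : H ⊆ annSeries B (k+1)) :
    IsSubSkewBrace H := by
  refine ⟨h0, hadd, hneg, ?_, ?_⟩
  · intro x hx y hy
    have c : x * y - (x + y) ∈ annSeries B k := (mem_annSeries_succ.mp (hup hx) y).2.1
    have e : x * y = (x * y - (x + y)) + (x + y) := by
      rw [sub_eq_add_neg, add_assoc, neg_add_cancel, add_zero]
    rw [e]
    exact hadd _ (hlow c) _ (hadd _ hx _ hy)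
  · intro x hx
    have c : x * x⁻¹ - (x + x⁻¹) ∈ annSeries B k := (mem_annSeries_succ.mp (hup hx) x⁻¹).2.1
    rw [mul_inv_cancel, ← zeroEqOne, zero_sub] at c
    have c2 := (ann_isIdeal k).1.2.2.1 _ c
    rw [neg_neg] at c2
    have e : x⁻¹ = -x + (x + x⁻¹) := (neg_add_cancel_left _ _).symm
    rw [e]
    exact hadd _ (hneg _ hx) _ (hlow c2)

lemma L_lemma : ∀ j : ℕ, ∀ K : Set B, (∀ a ∈ K, ∀ b ∈ K, a * b ∈ K) →
    annSeries B j ⊆ K → ∀ z ∈ annSeries B j, ∀ w ∈ K, z + w ∈ K := by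
  intro j
  induction j with
  | zero =>
    intro K _ _ z hz w hw
    have hz0 : z = 0 := hz
    rwa [hz0, zero_add]
  | succ j ih =>
    intro K hmul hsub z hz w hw
    have hsub' : annSeries B j ⊆ K := fun t ht => hsub (ann_mono j ht)
    have hd : z * w - (z + w) ∈ annSeries B j := (mem_annSeries_succ.mp hz w).2.1
    have hdneg : -(z * w - (z + w)) ∈ annSeries B j := (ann_isIdeal j).1.2.2.1 _ hd
    have e : z + w = -(z * w - (z + w)) + (z * w) := by
      rw [neg_sub, sub_eq_add_neg, add_assoc, neg_add_cancel, add_zero]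
    rw [e]
    exact ih K hmul hsub' _ hdneg _ (hmul _ (hsub hz) _ hw)

lemma L'_lemma {j : ℕ} {K : Set B} (hmul : ∀ a ∈ K, ∀ b ∈ K, a * b ∈ K)
    (hsub : annSeries B j ⊆ K) {z w : B} (hz : z ∈ annSeries B j) (hw : w ∈ K) :
    w + z ∈ K := by
  cases j with
  | zero =>
    have hz0 : z = 0 := hz
    rwa [hz0, add_zero]
  | succ j =>
    have he : (z + w) - (w + z) ∈ annSeries B j := (mem_annSeries_succ.mp hz w).2.2
    have heneg : -((z + w) - (w + z)) ∈ annSeries B (j+1) :=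
      ann_mono j ((ann_isIdeal j).1.2.2.1 _ he)
    have e : w + z = -((z + w) - (w + z)) + (z + w) := by
      rw [neg_sub, sub_eq_add_neg, add_assoc, neg_add_cancel, add_zero]
    rw [e]
    exact L_lemma (j+1) K hmul hsub _ heneg _ (L_lemma (j+1) K hmul hsub _ hz _ hw)

/-- A multiplicative subgroup squeezed between `Ann_k` and `Ann_{k+1}` is a sub skew brace. -/
lemma mulSubgroup_isSub {k : ℕ} {K : Set B} (h1 : (1:B) ∈ K)
    (hmul : ∀ a ∈ K, ∀ b ∈ K, a * b ∈ K) (hinv : ∀ a ∈ K, a⁻¹ ∈ K)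
    (hlow : annSeries B k ⊆ K) (hup : K ⊆ annSeries B (k+1)) :
    IsSubSkewBrace K := by
  have hadd : ∀ x ∈ K, ∀ y ∈ K, x + y ∈ K := by
    intro x hx y hy
    have c : x * y - (x + y) ∈ annSeries B k := (mem_annSeries_succ.mp (hup hx) y).2.1
    have cneg := (ann_isIdeal k).1.2.2.1 _ c
    have e : x + y = -(x * y - (x + y)) + (x * y) := by
      rw [neg_sub, sub_eq_add_neg, add_assoc, neg_add_cancel, add_zero]
    rw [e]
    exact L_lemma k K hmul hlow _ cneg _ (hmul _ hx _ hy)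
  refine ⟨by rwa [zeroEqOne], hadd, ?_, hmul, hinv⟩
  intro x hx
  have c : x * x⁻¹ - (x + x⁻¹) ∈ annSeries B k := (mem_annSeries_succ.mp (hup hx) x⁻¹).2.1
  rw [mul_inv_cancel, ← zeroEqOne, zero_sub] at c
  have e : -x = x⁻¹ + (-(x + x⁻¹)) := by rw [neg_add_rev, add_neg_cancel_left]
  rw [e]
  exact L'_lemma hmul hlow c (hinv _ hx)

/-! ### The chain argument -/

lemma step_fg (hacc : ACCSubSkewBrace B) (k : ℕ) :
    ∃ E : Finset B, ↑E ⊆ annSeries B (k+1) ∧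
      (AddSubgroup.closure (annSeries B k ∪ ↑E) : Set B) = annSeries B (k+1) := by
  classical
  by_contra hcon
  push_neg at hcon
  have hsubset : ∀ E : Finset B, ↑E ⊆ annSeries B (k+1) →
      (AddSubgroup.closure (annSeries B k ∪ ↑E) : Set B) ⊆ annSeries B (k+1) := by
    intro E hE
    have hle : AddSubgroup.closure (annSeries B k ∪ ↑E) ≤ annAdd (k+1) := by
      rw [AddSubgroup.closure_le]
      exact Set.union_subset (fun t ht => ann_mono k ht) hE
    exact hle
  have hex : ∀ E : Finset B, ↑E ⊆ annSeries B (k+1) →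
      ∃ x, x ∈ annSeries B (k+1) ∧
        x ∉ (AddSubgroup.closure (annSeries B k ∪ ↑E) : Set B) := by
    intro E hE
    rcases Set.not_subset.mp
      (fun hs => hcon E hE (Set.Subset.antisymm (hsubset E hE) hs)) with ⟨x, hx1, hx2⟩
    exact ⟨x, hx1, hx2⟩
  choose g hg1 hg2 using hex
  let g' : Finset B → B := fun E =>
    if h : (↑E : Set B) ⊆ annSeries B (k+1) then g E h else 0
  obtain ⟨Ef, hEf0, hEfs⟩ : ∃ Ef : ℕ → Finset B, Ef 0 = ∅ ∧
      ∀ n, Ef (n+1) = insert (g' (Ef n)) (Ef n) :=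
    ⟨fun n => Nat.rec ∅ (fun _ E => insert (g' E) E) n, rfl, fun n => rfl⟩
  have hEsub : ∀ n, (↑(Ef n) : Set B) ⊆ annSeries B (k+1) := by
    intro n
    induction n with
    | zero =>
      rw [hEf0]
      simp
    | succ n ih =>
      rw [hEfs, Finset.coe_insert]
      refine Set.insert_subset ?_ ih
      have : g' (Ef n) = g (Ef n) ih := dif_pos ih
      rw [this]
      exact hg1 _ ih
  set f : ℕ → Set B := fun n =>
    (AddSubgroup.closure (annSeries B k ∪ ↑(Ef n)) : Set B) with hf
  have hfsub : ∀ n, IsSubSkewBrace (f n) := by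
    intro n
    refine addSubgroup_isSub (AddSubgroup.zero_mem _) ?_ ?_ ?_ (hsubset _ (hEsub n))
    · intro a ha b hb; exact AddSubgroup.add_mem _ ha hb
    · intro a ha; exact AddSubgroup.neg_mem _ ha
    · intro t ht
      exact AddSubgroup.subset_closure (Set.mem_union_left _ ht)
  have hmono : ∀ n, f n ⊆ f (n+1) := by
    intro n
    have h1 : (↑(Ef n) : Set B) ⊆ ↑(Ef (n+1)) := by
      rw [hEfs, Finset.coe_insert]; exact Set.subset_insert _ _
    exact SetLike.coe_subset_coe.mpr
      (AddSubgroup.closure_mono (Set.union_subset_union_right _ h1))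
  obtain ⟨N, hN⟩ := hacc f hfsub hmono
  have hxin : g (Ef N) (hEsub N) ∈ f (N+1) := by
    apply AddSubgroup.subset_closure
    apply Set.mem_union_right
    rw [hEfs, Finset.coe_insert]
    have : g' (Ef N) = g (Ef N) (hEsub N) := dif_pos (hEsub N)
    rw [← this]
    exact Set.mem_insert _ _
  have hxout : g (Ef N) (hEsub N) ∉ f N := hg2 _ (hEsub N)
  rw [hN (N+1) (Nat.le_succ N)] at hxin
  exact hxout hxin

/-- An `AddSubgroup` built from a sub skew brace. -/
def sbAdd {S : Set B} (h : IsSubSkewBrace S) : AddSubgroup B where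
  carrier := S
  zero_mem' := h.1
  add_mem' := fun {a b} ha hb => h.2.1 _ ha _ hb
  neg_mem' := fun {a} ha => h.2.2.1 _ ha

lemma addClosure_union_eq {s e A : Set B}
    (hS : (AddSubgroup.closure s : Set B) = A) :
    (AddSubgroup.closure (s ∪ e) : Set B) = (AddSubgroup.closure (A ∪ e) : Set B) := by
  have h1 : AddSubgroup.closure (s ∪ e) ≤ AddSubgroup.closure (A ∪ e) := by
    rw [AddSubgroup.closure_le]
    refine Set.union_subset ?_ ?_
    · intro t ht
      have h : t ∈ (AddSubgroup.closure s : Set B) := AddSubgroup.subset_closure ht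
      rw [hS] at h
      exact AddSubgroup.subset_closure (Set.mem_union_left _ h)
    · exact fun t ht => AddSubgroup.subset_closure (Set.mem_union_right _ ht)
  have h2 : AddSubgroup.closure (A ∪ e) ≤ AddSubgroup.closure (s ∪ e) := by
    rw [AddSubgroup.closure_le]
    refine Set.union_subset ?_ ?_
    · rw [← hS]
      exact SetLike.coe_subset_coe.mpr (AddSubgroup.closure_mono Set.subset_union_left)
    · exact fun t ht => AddSubgroup.subset_closure (Set.mem_union_right _ ht)
  rw [le_antisymm h1 h2]

lemma mulClosure_union_eq {s e A : Set B}
    (hS : (Subgroup.closure s : Set B) = A) :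
    (Subgroup.closure (s ∪ e) : Set B) = (Subgroup.closure (A ∪ e) : Set B) := by
  have h1 : Subgroup.closure (s ∪ e) ≤ Subgroup.closure (A ∪ e) := by
    rw [Subgroup.closure_le]
    refine Set.union_subset ?_ ?_
    · intro t ht
      have h : t ∈ (Subgroup.closure s : Set B) := Subgroup.subset_closure ht
      rw [hS] at h
      exact Subgroup.subset_closure (Set.mem_union_left _ h)
    · exact fun t ht => Subgroup.subset_closure (Set.mem_union_right _ ht)
  have h2 : Subgroup.closure (A ∪ e) ≤ Subgroup.closure (s ∪ e) := by
    rw [Subgroup.closure_le]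
    refine Set.union_subset ?_ ?_
    · rw [← hS]
      exact SetLike.coe_subset_coe.mpr (Subgroup.closure_mono Set.subset_union_left)
    · exact fun t ht => Subgroup.subset_closure (Set.mem_union_right _ ht)
  rw [le_antisymm h1 h2]

lemma ann_fg (hacc : ACCSubSkewBrace B) :
    ∀ k : ℕ, ∃ S : Finset B,
      (AddSubgroup.closure (↑S : Set B) : Set B) = annSeries B k ∧
      (Subgroup.closure (↑S : Set B) : Set B) = annSeries B k := by
  classical
  intro k
  induction k with
  | zero =>
    refine ⟨∅, ?_, ?_⟩
    · rw [Finset.coe_empty, AddSubgroup.closure_empty]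
      rfl
    · rw [Finset.coe_empty, Subgroup.closure_empty]
      show (({1} : Set B)) = annSeries B 0
      rw [← zeroEqOne]
      rfl
  | succ k ih =>
    obtain ⟨S, hSadd, hSmul⟩ := ih
    obtain ⟨E, hE, hclos⟩ := step_fg hacc k
    refine ⟨S ∪ E, ?_, ?_⟩
    · rw [Finset.coe_union, addClosure_union_eq hSadd, hclos]
    · -- multiplicative part
      have hKup : (Subgroup.closure (annSeries B k ∪ ↑E) : Set B) ⊆ annSeries B (k+1) := by
        have hle : Subgroup.closure (annSeries B k ∪ ↑E) ≤ annMul (k+1) := by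
          rw [Subgroup.closure_le]
          exact Set.union_subset (fun t ht => ann_mono k ht) hE
        exact hle
      have hKsb : IsSubSkewBrace (Subgroup.closure (annSeries B k ∪ ↑E) : Set B) := by
        refine mulSubgroup_isSub (Subgroup.one_mem _) ?_ ?_ ?_ hKup
        · intro a ha b hb; exact Subgroup.mul_mem _ ha hb
        · intro a ha; exact Subgroup.inv_mem _ ha
        · intro t ht; exact Subgroup.subset_closure (Set.mem_union_left _ ht)
      have hKdown : annSeries B (k+1) ⊆
          (Subgroup.closure (annSeries B k ∪ ↑E) : Set B) := by
        rw [← hclos]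
        have hle : AddSubgroup.closure (annSeries B k ∪ ↑E) ≤ sbAdd hKsb := by
          rw [AddSubgroup.closure_le]
          exact Subgroup.subset_closure
        exact hle
      have hKeq : (Subgroup.closure (annSeries B k ∪ ↑E) : Set B) = annSeries B (k+1) :=
        Set.Subset.antisymm hKup hKdown
      rw [Finset.coe_union, mulClosure_union_eq hSmul, hKeq]

/-- Lemma 3.1: for an annihilator nilpotent skew brace with ACC on sub skew
braces, the following are equivalent: (1) `B` is finitely generated as a skew
brace; (2) `(B,+)` is finitely generated; (3) `(B,∘)` is finitely generated. -/
theorem stmt5 {B : Type*} [SkewBrace B]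
    (hacc : ACCSubSkewBrace B) (hann : AnnNilpotent B) :
    (SBFinitelyGenerated B ↔ AddGroup.FG B) ∧
    (SBFinitelyGenerated B ↔ Group.FG B) := by
  obtain ⟨n, hn⟩ := hann
  obtain ⟨S, hSadd, hSmul⟩ := ann_fg hacc n
  rw [hn] at hSadd hSmul
  have haddfg : AddGroup.FG B := by
    rw [AddGroup.fg_iff]
    exact ⟨↑S, AddSubgroup.coe_eq_univ.mp hSadd, S.finite_toSet⟩
  have hmulfg : Group.FG B := by
    rw [Group.fg_iff]
    exact ⟨↑S, Subgroup.coe_eq_univ.mp hSmul, S.finite_toSet⟩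
  have hsb : SBFinitelyGenerated B := by
    refine ⟨↑S, S.finite_toSet, ?_⟩
    intro T hT hST
    have hle : AddSubgroup.closure (↑S : Set B) ≤ sbAdd hT := by
      rw [AddSubgroup.closure_le]; exact hST
    apply Set.eq_univ_of_univ_subset
    rw [← hSadd]
    exact hle
  exact ⟨iff_of_true hsb haddfg, iff_of_true hsb hmulfg⟩

end SkewBrace
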